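/- Let 1≤i≤m and α∈T. Suppose that for all x,y∈V(Γᵢ(α)) one has d⁺_{Γᵢ(α)}(x)=d⁺_{Γᵢ(α)}(y) or d⁻_{Γᵢ(α)}(x)=d⁻_{Γᵢ(α)}(y). If Γᵢ(α) is not a complete graph, then Γᵢ(α) is a weakly distance-regular digraph of diameter 2 and girth g with g≤3, and ∂̃(Γᵢ(α))={(0,0),(1,2),(2,1),(1,g−1)}. -/

import Mathlib

namespace Paper

/-- A digraph: a set of vertices together with a set of arcs (ordered pairs of
distinct vertices). -/
structure Digraph (V : Type*) where
  Adj : V → V → Prop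
  loopless : ∀ v : V, ¬ Adj v v

variable {V V' : Type*}

namespace Digraph

/-- There is a directed walk of length `n` from `x` to `y`. -/
def HasPath (G : Digraph V) (x y : V) (n : ℕ) : Prop :=
  ∃ f : ℕ → V, f 0 = x ∧ f n = y ∧ ∀ k < n, G.Adj (f k) (f (k + 1))

/-- The distance `∂(x,y)`: the length of a shortest directed path from `x` to `y`. -/
noncomputable def dist (G : Digraph V) (x y : V) : ℕ :=
  sInf {n | G.HasPath x y n}

/-- The two-way distance `∂̃(x,y) = (∂(x,y), ∂(y,x))`. -/
noncomputable def tdist (G : Digraph V) (x y : V) : ℕ × ℕ :=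
  (G.dist x y, G.dist y x)

/-- The two-way distance set `∂̃(Γ)`. -/
def tdSet (G : Digraph V) : Set (ℕ × ℕ) :=
  {p | ∃ x y : V, G.tdist x y = p}

def StronglyConnected (G : Digraph V) : Prop :=
  ∀ x y : V, ∃ n, G.HasPath x y n

/-- `P_{ĩ,j̃}(x,y)`: the set of `z` with `∂̃(x,z) = ĩ` and `∂̃(z,y) = j̃`. -/
def P (G : Digraph V) (i j : ℕ × ℕ) (x y : V) : Set V :=
  {z | G.tdist x z = i ∧ G.tdist z y = j}

open Classical in
/-- The intersection number `p^{h̃}_{ĩ,j̃}`, defined using an arbitrarily chosen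
pair at two-way distance `h̃` (and `0` if there is no such pair). -/
noncomputable def p (G : Digraph V) (h i j : ℕ × ℕ) : ℕ :=
  if hh : ∃ xy : V × V, G.tdist xy.1 xy.2 = h then
    Nat.card (G.P i j hh.choose.1 hh.choose.2)
  else 0

/-- A weakly distance-regular digraph: strongly connected, and
`|P_{ĩ,j̃}(x,y)|` depends only on `∂̃(x,y)`, `ĩ` and `j̃`. -/
def IsWDR (G : Digraph V) : Prop :=
  G.StronglyConnected ∧
    ∀ (i j : ℕ × ℕ) (x y : V), Nat.card (G.P i j x y) = G.p (G.tdist x y) i j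

/-- Commutativity: `p^{h̃}_{ĩ,j̃} = p^{h̃}_{j̃,ĩ}` for all `h̃,ĩ,j̃ ∈ ∂̃(Γ)`. -/
def IsCommutative (G : Digraph V) : Prop :=
  ∀ h i j : ℕ × ℕ, h ∈ G.tdSet → i ∈ G.tdSet → j ∈ G.tdSet → G.p h i j = G.p h j i

/-- `Γ` is an undirected graph, i.e. its arc set is symmetric. -/
def IsUndirected (G : Digraph V) : Prop :=
  ∀ x y : V, G.Adj x y → G.Adj y x

def IsSemicomplete (G : Digraph V) : Prop :=
  ∀ x y : V, x ≠ y → (G.Adj x y ∨ G.Adj y x)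

/-- `Γ` is a complete (undirected) graph. -/
def IsCompleteDigraph (G : Digraph V) : Prop :=
  ∀ x y : V, x ≠ y → (G.Adj x y ∧ G.Adj y x)

/-- The underlying graph of a digraph. -/
def underlying (G : Digraph V) : SimpleGraph V where
  Adj x y := G.Adj x y ∨ G.Adj y x
  symm := ⟨fun _ _ h => h.symm⟩
  loopless := ⟨fun x h => h.elim (G.loopless x) (G.loopless x)⟩

/-- The diameter: the maximum value of the distance function. -/
noncomputable def diameter (G : Digraph V) : ℕ :=
  sSup {n | ∃ x y : V, G.dist x y = n}

/-- The girth: the length of a shortest circuit. -/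
noncomputable def girth (G : Digraph V) : ℕ :=
  sInf {n | 0 < n ∧ ∃ x : V, G.HasPath x x n}

/-- Number of out-neighbours `d⁺(x)`. -/
noncomputable def outDeg (G : Digraph V) (x : V) : ℕ := Nat.card {y | G.Adj x y}

/-- Number of in-neighbours `d⁻(x)`. -/
noncomputable def inDeg (G : Digraph V) (x : V) : ℕ := Nat.card {y | G.Adj y x}

def IsIsomorphicTo (G : Digraph V) (G' : Digraph V') : Prop :=
  ∃ e : V ≃ V', ∀ x y : V, G.Adj x y ↔ G'.Adj (e x) (e y)

/-- The Cartesian product of two digraphs. -/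
def box (G : Digraph V) (G' : Digraph V') : Digraph (V × V') where
  Adj x y := (x.1 = y.1 ∧ G'.Adj x.2 y.2) ∨ (G.Adj x.1 y.1 ∧ x.2 = y.2)
  loopless := fun v h => h.elim (fun h' => G'.loopless v.2 h'.2) (fun h' => G.loopless v.1 h'.1)

/-- Two digraphs have the same intersection numbers. -/
def SameIntersectionNumbers (G : Digraph V) (G' : Digraph V') : Prop :=
  G.tdSet = G'.tdSet ∧
    ∀ h i j : ℕ × ℕ, h ∈ G.tdSet → i ∈ G.tdSet → j ∈ G.tdSet → G.p h i j = G'.p h i j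

/-- Induced subdigraph on a set of vertices. -/
def induce (G : Digraph V) (s : Set V) : Digraph s where
  Adj x y := G.Adj x.1 y.1
  loopless := fun v h => G.loopless v.1 h

end Digraph

/-- The Cartesian product of a family of digraphs. -/
def piBox {ι : Type*} {W : ι → Type*} (G : ∀ i, Digraph (W i)) : Digraph (∀ i, W i) where
  Adj x y := ∃ i, (G i).Adj (x i) (y i) ∧ ∀ j, j ≠ i → x j = y j
  loopless := by
    rintro v ⟨i, hi, -⟩
    exact (G i).loopless _ hi

/-- The Cayley digraph `Cay(A,S)` of an additive group (for `S ⊆ A ∖ {0}`). -/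
def Cay (A : Type*) [AddGroup A] (S : Set A) : Digraph A where
  Adj x y := x ≠ y ∧ y - x ∈ S
  loopless := fun _ h => h.1 rfl

/-- The Cayley graph of an additive group with respect to a symmetric connection set. -/
def cayleyGraph (A : Type*) [AddGroup A] (S : Set A) : SimpleGraph A where
  Adj x y := x ≠ y ∧ (y - x ∈ S ∨ x - y ∈ S)
  symm := ⟨fun _ _ h => ⟨h.1.symm, h.2.symm⟩⟩
  loopless := ⟨fun _ h => h.1 rfl⟩

/-- The Hamming graph `H(ι, S)`: vertices are tuples, adjacent iff they differ in
exactly one coordinate. -/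
def hammingGraph (ι : Type*) (S : Type*) : SimpleGraph (ι → S) where
  Adj x y := ∃ i, x i ≠ y i ∧ ∀ j, j ≠ i → x j = y j
  symm := by
    refine ⟨?_⟩
    rintro x y ⟨i, h1, h2⟩
    exact ⟨i, h1.symm, fun j hj => (h2 j hj).symm⟩
  loopless := by
    refine ⟨?_⟩
    rintro x ⟨i, h1, -⟩
    exact h1 rfl

/-- The folded `n`-cube: vertices are `(n-1)`-tuples over `ℤ₂`, adjacent iff they
differ in exactly one coordinate or in all `n-1` coordinates. -/
def foldedCube (n : ℕ) : SimpleGraph (Fin (n - 1) → ZMod 2) where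
  Adj x y := (∃ i, x i ≠ y i ∧ ∀ j, j ≠ i → x j = y j) ∨ (x ≠ y ∧ ∀ j, x j ≠ y j)
  symm := by
    refine ⟨?_⟩
    rintro x y (⟨i, h1, h2⟩ | ⟨h1, h2⟩)
    · exact Or.inl ⟨i, h1.symm, fun j hj => (h2 j hj).symm⟩
    · exact Or.inr ⟨h1.symm, fun j => (h2 j).symm⟩
  loopless := by
    refine ⟨?_⟩
    rintro x (⟨i, h1, -⟩ | ⟨h1, -⟩)
    · exact h1 rfl
    · exact h1 rfl

/-- The Cartesian product of a family of simple graphs. -/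
def piBoxGraph {ι : Type*} {W : ι → Type*} (G : ∀ i, SimpleGraph (W i)) :
    SimpleGraph (∀ i, W i) where
  Adj x y := ∃ i, (G i).Adj (x i) (y i) ∧ ∀ j, j ≠ i → x j = y j
  symm := by
    refine ⟨?_⟩
    rintro x y ⟨i, h1, h2⟩
    exact ⟨i, (G i).adj_symm h1, fun j hj => (h2 j hj).symm⟩
  loopless := by
    refine ⟨?_⟩
    rintro x ⟨i, h1, -⟩
    exact (G i).loopless.irrefl _ h1

/-- The Shrikhande graph `Cay(ℤ₄ × ℤ₄, {±(1,0), ±(0,1), ±(1,1)})`. -/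
def shrikhande : SimpleGraph (ZMod 4 × ZMod 4) :=
  cayleyGraph (ZMod 4 × ZMod 4) {(1, 0), (-1, 0), (0, 1), (0, -1), (1, 1), (-1, -1)}

/-- The Doob graph `G(d₁, d₂)`: the Cartesian product of `d₁` copies of the
Shrikhande graph with the Hamming graph `H(d₂, 4)`. -/
def doobGraph (d₁ d₂ : ℕ) :
    SimpleGraph ((Fin d₁ → ZMod 4 × ZMod 4) × (Fin d₂ → ZMod 4)) :=
  (piBoxGraph fun _ : Fin d₁ => shrikhande).boxProd (hammingGraph (Fin d₂) (ZMod 4))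

/-- `c_i(x,y)`: the number of neighbours of `y` at distance `i - 1` from `x`. -/
noncomputable def cNum (G : SimpleGraph V) (i : ℕ) (x y : V) : ℕ :=
  Nat.card {z : V | G.Adj y z ∧ G.dist x z = i - 1}

/-- `a_i(x,y)`: the number of neighbours of `y` at distance `i` from `x`. -/
noncomputable def aNum (G : SimpleGraph V) (i : ℕ) (x y : V) : ℕ :=
  Nat.card {z : V | G.Adj y z ∧ G.dist x z = i}

/-- `b_i(x,y)`: the number of neighbours of `y` at distance `i + 1` from `x`. -/
noncomputable def bNum (G : SimpleGraph V) (i : ℕ) (x y : V) : ℕ :=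
  Nat.card {z : V | G.Adj y z ∧ G.dist x z = i + 1}

/-- A distance-regular graph. -/
def IsDRG (G : SimpleGraph V) : Prop :=
  G.Connected ∧
    ∀ (i : ℕ) (x y x' y' : V), G.dist x y = i → G.dist x' y' = i →
      cNum G i x y = cNum G i x' y' ∧ bNum G i x y = bNum G i x' y'

/-- A distance-transitive graph. -/
def IsDistanceTransitive (G : SimpleGraph V) : Prop :=
  G.Connected ∧
    ∀ x y x' y' : V, G.dist x y = G.dist x' y' → ∃ σ : G ≃g G, σ x = x' ∧ σ y = y'

/-- The vertex set of `Γ_i(α)`: all tuples obtained from `α` by inserting an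
arbitrary element of `S` in the `i`-th coordinate. -/
def lineSet {n : ℕ} {S : Type*} (i : Fin (n + 1)) (α : Fin n → S) : Set (Fin (n + 1) → S) :=
  Set.range fun b : S => i.insertNth b α

/-- The induced subdigraph `Γ_i(α)`. -/
def Digraph.line {n : ℕ} {S : Type*} (Γ : Digraph (Fin (n + 1) → S)) (i : Fin (n + 1))
    (α : Fin n → S) : Digraph (lineSet i α) :=
  Γ.induce (lineSet i α)

/-- Pad a tuple of length `m` with the entry `o` to a tuple of length `d`. -/
def pad {S : Type*} (o : S) (d m : ℕ) (α : Fin m → S) : Fin d → S :=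
  fun j => if h : j.1 < m then α ⟨j.1, h⟩ else o

/-- The digraph `Γ^{[m]}` on `S^m`: `(α,β)` is an arc iff the padded tuples form
an arc of `Γ`. -/
def Digraph.trunc {S : Type*} {d : ℕ} (Γ : Digraph (Fin d → S)) (o : S) (m : ℕ) :
    Digraph (Fin m → S) where
  Adj α β := Γ.Adj (pad o d m α) (pad o d m β)
  loopless := fun _ h => Γ.loopless _ h

/-- The digraph `Γ^i` on `S`: `(a,b)` is an arc iff the tuples with `a` resp. `b`
in the `i`-th coordinate and `o` elsewhere form an arc of `Γ`. -/
def Digraph.coordDigraph {S : Type*} {d : ℕ} (Γ : Digraph (Fin d → S)) (o : S) (i : Fin d) :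
    Digraph S where
  Adj a b := Γ.Adj (Function.update (fun _ => o) i a) (Function.update (fun _ => o) i b)
  loopless := fun _ h => Γ.loopless _ h

/-- The set `T = S^{m-1} × {(o,…,o)}` (as a subset of `S^{d-1}`, here `d = n+1`). -/
def Tset {n : ℕ} (S : Type*) (o : S) (m : ℕ) : Set (Fin n → S) :=
  {α | ∀ j : Fin n, m - 1 ≤ j.1 → α j = o}

end Paper

/-!
Two distinct vertices of `Γᵢ(α)` differ only in coordinate `i < m`, so they are adjacent in the
Hamming graph underlying `Γ^{[m]}`: the line is semicomplete, and since `a₁ = q - 2` it is a maximal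
clique of `Σ`, so it contains every common neighbour of two of its vertices.

If `x → y` is an arc but `y ↛ x`, then `y → z → x` for some `z` on the line: otherwise the
out-neighbourhood of `y` lies strictly inside that of `x`, and the in-neighbourhood of `x` strictly
inside that of `y`, contradicting the degree condition. Hence all two-way distances in `Γᵢ(α)` lie
in `{(0,0), (1,1), (1,2), (2,1)}` and coincide with those in `Γ`. For `x ≠ y` every vertex counted
by `|P_{ĩ,j̃}(x,y)|` is then `x`, `y` or a common neighbour of both, so lies on the line, and these
numbers are intersection numbers of `Γ`.

On the diagonal, `|P_{ĩ,j̃}(x,x)|` is a valency. The degree condition makes all out-degrees or all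
in-degrees equal, and as the line is not complete every vertex `x` then has a partner `y` at one
fixed two-way distance `(2,1)` or `(1,2)`; summing `|P_{ĩ,k̃}(x,y)|` over `k̃` shows that the
valencies are constant too.
-/

lemma SimpleGraph.IsClique.mem_of_adj_of_adj_of_aNum_le {V : Type*} [Finite V]
    {G : SimpleGraph V} {s : Set V} (hs : G.IsClique s) {x y z : V} (hx : x ∈ s) (hy : y ∈ s)
    (hxy : x ≠ y) (ha : Paper.aNum G 1 x y ≤ s.ncard - 2) (hxz : G.Adj x z) (hyz : G.Adj y z) :
    z ∈ s := by
  set A := {z | G.Adj y z ∧ G.dist x z = 1}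
  have hsub : s \ {x, y} ⊆ A := by
    rintro w ⟨hw, hwxy⟩
    simp only [Set.mem_insert_iff, Set.mem_singleton_iff, not_or] at hwxy
    exact ⟨hs hy hw (Ne.symm hwxy.2),
      SimpleGraph.dist_eq_one_iff_adj.mpr (hs hx hw (Ne.symm hwxy.1))⟩
  have hcard : A.ncard ≤ (s \ {x, y}).ncard := by
    rw [Set.ncard_sdiff (Set.insert_subset hx (Set.singleton_subset_iff.mpr hy)),
      Set.ncard_pair hxy, ← Nat.card_coe_set_eq]
    exact ha
  have hzA : z ∈ A := ⟨hyz, SimpleGraph.dist_eq_one_iff_adj.mpr hxz⟩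
  rw [← Set.eq_of_subset_of_ncard_le hsub hcard] at hzA
  exact hzA.1

namespace Paper

lemma forall_eq_or_forall_eq_of_eq_or_eq {α β γ : Type*} {f : α → β} {g : α → γ}
    (h : ∀ a b, f a = f b ∨ g a = g b) : (∀ a b, f a = f b) ∨ ∀ a b, g a = g b := by
  by_contra! hne
  obtain ⟨⟨u, v, hf⟩, c, d, hg⟩ := hne
  have hgu : ∀ a, g a = g u := fun a => by
    by_cases hau : f a = f u
    · exact ((h a v).resolve_left (hau ▸ hf)).trans ((h u v).resolve_left hf).symm
    · exact (h a u).resolve_left hau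
  exact hg ((hgu c).trans (hgu d).symm)

namespace Digraph

variable {V : Type*} {G : Digraph V} {x y : V}

lemma hasPath_zero : G.HasPath x y 0 ↔ x = y := by
  constructor
  · rintro ⟨f, rfl, rfl, -⟩
    rfl
  · rintro rfl
    exact ⟨fun _ => x, rfl, rfl, fun k hk => absurd hk k.not_lt_zero⟩

lemma hasPath_one : G.HasPath x y 1 ↔ G.Adj x y := by
  constructor
  · rintro ⟨f, rfl, rfl, hf⟩
    exact hf 0 one_pos
  · intro h
    refine ⟨fun k => if k = 0 then x else y, rfl, rfl, fun k hk => ?_⟩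
    obtain rfl : k = 0 := by omega
    simpa using h

lemma hasPath_two : G.HasPath x y 2 ↔ ∃ z, G.Adj x z ∧ G.Adj z y := by
  constructor
  · rintro ⟨f, rfl, rfl, hf⟩
    exact ⟨f 1, hf 0 (by omega), hf 1 (by omega)⟩
  · rintro ⟨z, hxz, hzy⟩
    refine ⟨fun k => if k = 0 then x else if k = 1 then z else y, rfl, rfl, fun k hk => ?_⟩
    interval_cases k <;> simpa

lemma hasPath_three {z : V} (hxy : G.Adj x y) (hyz : G.Adj y z) (hzx : G.Adj z x) :
    G.HasPath x x 3 := by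
  refine ⟨fun k => if k = 1 then y else if k = 2 then z else x, rfl, rfl, fun k hk => ?_⟩
  interval_cases k <;> simpa

lemma dist_le_of_hasPath {n : ℕ} (h : G.HasPath x y n) : G.dist x y ≤ n :=
  Nat.sInf_le h

lemma hasPath_dist {n : ℕ} (h : G.HasPath x y n) : G.HasPath x y (G.dist x y) :=
  Nat.sInf_mem (s := {n | G.HasPath x y n}) ⟨n, h⟩

lemma dist_self (x : V) : G.dist x x = 0 :=
  Nat.le_zero.mp (dist_le_of_hasPath (hasPath_zero.mpr rfl))

lemma eq_of_dist_eq_zero {n : ℕ} (h : G.HasPath x y n) (h0 : G.dist x y = 0) : x = y :=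
  hasPath_zero.mp (h0 ▸ hasPath_dist h)

lemma dist_eq_one_iff : G.dist x y = 1 ↔ G.Adj x y := by
  refine ⟨fun h => ?_, fun h => le_antisymm (dist_le_of_hasPath (hasPath_one.mpr h)) ?_⟩
  · by_cases hp : ∃ n, G.HasPath x y n
    · obtain ⟨n, hn⟩ := hp
      exact hasPath_one.mp (h ▸ hasPath_dist hn)
    · simp [dist, not_exists.mp hp] at h
  · refine Nat.one_le_iff_ne_zero.mpr fun h0 => G.loopless x ?_
    rwa [← eq_of_dist_eq_zero (hasPath_one.mpr h) h0] at h

lemma dist_eq_two (hxy : x ≠ y) (hna : ¬ G.Adj x y) (h : ∃ z, G.Adj x z ∧ G.Adj z y) :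
    G.dist x y = 2 := by
  have h2 := hasPath_two.mpr h
  have hd := hasPath_dist h2
  have hle := dist_le_of_hasPath h2
  interval_cases hk : G.dist x y
  · exact absurd (hasPath_zero.mp hd) hxy
  · exact absurd (hasPath_one.mp hd) hna
  · rfl

lemma tdist_swap (x y : V) : G.tdist y x = (G.tdist x y).swap := rfl

lemma StronglyConnected.tdist_eq_zero_iff (hsc : G.StronglyConnected) :
    G.tdist x y = (0, 0) ↔ x = y := by
  refine ⟨fun h => eq_of_dist_eq_zero (hsc x y).choose_spec (congrArg Prod.fst h), ?_⟩
  rintro rfl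
  simp [tdist, dist_self]

lemma StronglyConnected.eq_or_adj_of_tdist (hsc : G.StronglyConnected)
    (h : G.tdist x y = (0, 0) ∨ (G.tdist x y).1 = 1 ∨ (G.tdist x y).2 = 1) :
    x = y ∨ G.underlying.Adj x y := by
  rcases h with h | h | h
  · exact .inl (hsc.tdist_eq_zero_iff.mp h)
  · exact .inr (.inl (dist_eq_one_iff.mp h))
  · exact .inr (.inr (dist_eq_one_iff.mp h))

lemma mem_tdSet_of_mem_P {i j : ℕ × ℕ} {z : V} (hz : z ∈ G.P i j x y) :
    i ∈ G.tdSet ∧ j ∈ G.tdSet :=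
  ⟨⟨x, z, hz.1⟩, ⟨z, y, hz.2⟩⟩

lemma P_self (i j : ℕ × ℕ) (x : V) : G.P i j x x = {z | G.tdist x z = i ∧ i.swap = j} := by
  ext z
  simp only [P, Set.mem_ofPred_eq, tdist_swap z x]
  constructor
  · rintro ⟨rfl, rfl⟩
    exact ⟨rfl, rfl⟩
  · rintro ⟨rfl, rfl⟩
    exact ⟨rfl, rfl⟩

lemma card_setOf_tdist_eq_sum [Fintype V] (i : ℕ × ℕ) (x y : V) :
    Nat.card {z | G.tdist x z = i} =
      ∑ k ∈ Finset.univ.image (fun p : V × V => G.tdist p.1 p.2), Nat.card (G.P i k x y) := by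
  classical
  simp only [Nat.card_eq_card_toFinset, P, Set.toFinset_ofPred]
  rw [Finset.card_eq_sum_card_fiberwise (f := fun z => G.tdist z y)
    (t := Finset.univ.image fun p : V × V => G.tdist p.1 p.2)
    fun z _ => Finset.mem_image_of_mem _ (Finset.mem_univ (z, y))]
  simp [Finset.filter_filter]

lemma isWDR_of_card_P_eq (hsc : G.StronglyConnected)
    (hP : ∀ i j x y x' y', G.tdist x y = G.tdist x' y' →
      Nat.card (G.P i j x y) = Nat.card (G.P i j x' y')) : G.IsWDR := by
  refine ⟨hsc, fun i j x y => ?_⟩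
  have hex : ∃ xy : V × V, G.tdist xy.1 xy.2 = G.tdist x y := ⟨(x, y), rfl⟩
  rw [p, dif_pos hex]
  exact hP i j x y _ _ hex.choose_spec.symm

lemma card_P_eq_of_partner [Finite V] (hsc : G.StronglyConnected) {h₀ : ℕ × ℕ}
    (hpartner : ∀ x, ∃ y, x ≠ y ∧ G.tdist x y = h₀)
    (hreg : ∀ i j x y x' y', x ≠ y → G.tdist x y = G.tdist x' y' →
      Nat.card (G.P i j x y) = Nat.card (G.P i j x' y'))
    (i j : ℕ × ℕ) {x y x' y' : V} (h : G.tdist x y = G.tdist x' y') :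
    Nat.card (G.P i j x y) = Nat.card (G.P i j x' y') := by
  have := Fintype.ofFinite V
  by_cases hxy : x = y
  · subst hxy
    obtain rfl : x' = y' := hsc.tdist_eq_zero_iff.mp (h.symm.trans (hsc.tdist_eq_zero_iff.mpr rfl))
    have hvalency : Nat.card {z | G.tdist x z = i} = Nat.card {z | G.tdist x' z = i} := by
      obtain ⟨y, hxy, hy⟩ := hpartner x
      obtain ⟨y', hxy', hy'⟩ := hpartner x'
      rw [card_setOf_tdist_eq_sum i x y, card_setOf_tdist_eq_sum i x' y']
      exact Finset.sum_congr rfl fun k _ => hreg i k x y x' y' hxy (hy.trans hy'.symm)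
    by_cases hij : i.swap = j
    · simpa [P_self, hij] using hvalency
    · simp [P_self, hij]
  · exact hreg i j x y x' y' hxy h

def reverse (G : Digraph V) : Digraph V where
  Adj x y := G.Adj y x
  loopless := G.loopless

lemma IsSemicomplete.reverse (h : G.IsSemicomplete) : G.reverse.IsSemicomplete :=
  fun x y hxy => (h x y hxy).symm

lemma isCompleteDigraph_reverse_iff : G.reverse.IsCompleteDigraph ↔ G.IsCompleteDigraph :=
  ⟨fun h x y hxy => (h x y hxy).symm, fun h x y hxy => (h x y hxy).symm⟩

lemma forall_exists_not_adj_of_outDeg_eq [Finite V] (hout : ∀ x y, G.outDeg x = G.outDeg y)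
    (hnc : ¬ G.IsCompleteDigraph) (x : V) : ∃ y, y ≠ x ∧ ¬ G.Adj x y := by
  by_contra! hx
  have hnbr : ∀ w, {y | G.Adj w y} = {w}ᶜ := by
    have hsub : ∀ w, {y | G.Adj w y} ⊆ {w}ᶜ := fun w y hy (hyw : y = w) =>
      G.loopless w (hyw ▸ hy)
    have hx' : {y | G.Adj x y} = {x}ᶜ := (hsub x).antisymm fun y hy => hx y hy
    intro w
    refine Set.eq_of_subset_of_ncard_le (hsub w) ?_ (Set.toFinite _)
    have hdeg : G.outDeg w = G.outDeg x := hout w x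
    rw [outDeg, outDeg, Nat.card_coe_set_eq, Nat.card_coe_set_eq] at hdeg
    rw [hdeg, hx', Set.ncard_compl, Set.ncard_compl, Set.ncard_singleton, Set.ncard_singleton]
  have hadj : ∀ a b, a ≠ b → G.Adj a b := fun a b hab =>
    show b ∈ {y | G.Adj a y} from (hnbr a).symm ▸ hab.symm
  exact hnc fun a b hab => ⟨hadj a b hab, hadj b a hab.symm⟩

lemma forall_exists_not_adj_of_inDeg_eq [Finite V] (hin : ∀ x y, G.inDeg x = G.inDeg y)
    (hnc : ¬ G.IsCompleteDigraph) (x : V) : ∃ y, y ≠ x ∧ ¬ G.Adj y x :=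
  forall_exists_not_adj_of_outDeg_eq (G := G.reverse) hin
    (isCompleteDigraph_reverse_iff.not.mpr hnc) x

def ArcsOnTriangles (G : Digraph V) : Prop :=
  ∀ x y, G.Adj x y → ¬ G.Adj y x → ∃ z, G.Adj y z ∧ G.Adj z x

lemma IsSemicomplete.exists_adj_adj_of_outDeg_eq [Finite V] (hsemi : G.IsSemicomplete)
    (hxy : G.Adj x y) (hyx : ¬ G.Adj y x) (hdeg : G.outDeg x = G.outDeg y) :
    ∃ z, G.Adj y z ∧ G.Adj z x := by
  by_contra! hcon
  have hss : {z | G.Adj y z} ⊂ {z | G.Adj x z} := by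
    refine ⟨fun z hz => ?_, fun hsup => G.loopless y (hsup hxy)⟩
    have hxz : x ≠ z := by
      rintro rfl
      exact hyx hz
    exact (hsemi x z hxz).resolve_right (hcon z hz)
  have hlt := Set.ncard_lt_ncard hss
  rw [outDeg, outDeg, Nat.card_coe_set_eq, Nat.card_coe_set_eq] at hdeg
  omega

lemma IsSemicomplete.exists_adj_adj_of_inDeg_eq [Finite V] (hsemi : G.IsSemicomplete)
    (hxy : G.Adj x y) (hyx : ¬ G.Adj y x) (hdeg : G.inDeg x = G.inDeg y) :
    ∃ z, G.Adj y z ∧ G.Adj z x := by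
  obtain ⟨z, hxz, hzy⟩ :=
    hsemi.reverse.exists_adj_adj_of_outDeg_eq (x := y) (y := x) hxy hyx hdeg.symm
  exact ⟨z, hzy, hxz⟩

lemma IsSemicomplete.arcsOnTriangles [Finite V] (hsemi : G.IsSemicomplete)
    (hdeg : ∀ x y, G.outDeg x = G.outDeg y ∨ G.inDeg x = G.inDeg y) : G.ArcsOnTriangles :=
  fun _ _ hxy hyx => (hdeg _ _).elim (hsemi.exists_adj_adj_of_outDeg_eq hxy hyx)
    (hsemi.exists_adj_adj_of_inDeg_eq hxy hyx)

lemma IsSemicomplete.exists_adj_not_adj (hsemi : G.IsSemicomplete)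
    (hnc : ¬ G.IsCompleteDigraph) : ∃ x y, G.Adj x y ∧ ¬ G.Adj y x := by
  simp only [IsCompleteDigraph, not_forall, not_and_or] at hnc
  obtain ⟨x, y, hxy, hno⟩ := hnc
  rcases hsemi x y hxy with h | h
  · exact ⟨x, y, h, hno.resolve_left (not_not.mpr h)⟩
  · exact ⟨y, x, h, hno.resolve_right (not_not.mpr h)⟩

lemma tdist_of_adj_of_adj (hxy : G.Adj x y) (hyx : G.Adj y x) : G.tdist x y = (1, 1) := by
  rw [tdist, dist_eq_one_iff.mpr hxy, dist_eq_one_iff.mpr hyx]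

lemma ArcsOnTriangles.tdist_of_adj_of_not_adj (htri : G.ArcsOnTriangles) (hxy : G.Adj x y)
    (hyx : ¬ G.Adj y x) : G.tdist x y = (1, 2) := by
  have hne : y ≠ x := by
    rintro rfl
    exact hyx hxy
  rw [tdist, dist_eq_one_iff.mpr hxy, dist_eq_two hne hyx (htri x y hxy hyx)]

lemma IsSemicomplete.tdist_cases (hsemi : G.IsSemicomplete) (htri : G.ArcsOnTriangles)
    (x y : V) : G.tdist x y = (0, 0) ∨ G.tdist x y = (1, 1) ∨ G.tdist x y = (1, 2) ∨
      G.tdist x y = (2, 1) := by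
  by_cases hxy : x = y
  · subst hxy
    simp [tdist, dist_self]
  by_cases hxy' : G.Adj x y <;> by_cases hyx : G.Adj y x
  · exact .inr (.inl (tdist_of_adj_of_adj hxy' hyx))
  · exact .inr (.inr (.inl (htri.tdist_of_adj_of_not_adj hxy' hyx)))
  · exact .inr (.inr (.inr (by rw [tdist_swap, htri.tdist_of_adj_of_not_adj hyx hxy']; rfl)))
  · exact absurd (hsemi x y hxy) (by tauto)

lemma IsSemicomplete.exists_hasPath_le_two (hsemi : G.IsSemicomplete) (htri : G.ArcsOnTriangles)
    (x y : V) : ∃ k ≤ 2, G.HasPath x y k := by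
  by_cases hxy : x = y
  · exact ⟨0, by omega, hasPath_zero.mpr hxy⟩
  by_cases hxy' : G.Adj x y
  · exact ⟨1, by omega, hasPath_one.mpr hxy'⟩
  · have hyx := (hsemi x y hxy).resolve_left hxy'
    exact ⟨2, le_rfl, hasPath_two.mpr (htri y x hyx hxy')⟩

lemma IsSemicomplete.stronglyConnected (hsemi : G.IsSemicomplete) (htri : G.ArcsOnTriangles) :
    G.StronglyConnected := fun x y =>
  let ⟨k, _, hk⟩ := hsemi.exists_hasPath_le_two htri x y
  ⟨k, hk⟩

lemma IsSemicomplete.diameter_eq_two (hsemi : G.IsSemicomplete) (htri : G.ArcsOnTriangles)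
    (hxy : G.Adj x y) (hyx : ¬ G.Adj y x) : G.diameter = 2 := by
  have hle : ∀ u v, G.dist u v ≤ 2 := fun u v => by
    obtain ⟨k, hk, hp⟩ := hsemi.exists_hasPath_le_two htri u v
    exact (dist_le_of_hasPath hp).trans hk
  have h2 : G.dist y x = 2 := congrArg Prod.snd (htri.tdist_of_adj_of_not_adj hxy hyx)
  refine le_antisymm (csSup_le ⟨2, y, x, h2⟩ ?_) (le_csSup ⟨2, ?_⟩ ⟨y, x, h2⟩) <;>
    rintro _ ⟨u, v, rfl⟩ <;> exact hle u v

lemma two_le_of_hasPath_self {n : ℕ} (hn : 0 < n) (h : G.HasPath x x n) : 2 ≤ n := by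
  by_contra! hlt
  obtain rfl : n = 1 := by omega
  exact G.loopless x (hasPath_one.mp h)

lemma girth_eq_two (hxy : G.Adj x y) (hyx : G.Adj y x) : G.girth = 2 := by
  have h2 : 2 ∈ {n | 0 < n ∧ ∃ x, G.HasPath x x n} :=
    ⟨two_pos, x, hasPath_two.mpr ⟨y, hxy, hyx⟩⟩
  exact le_antisymm (Nat.sInf_le h2)
    (le_csInf ⟨2, h2⟩ fun _ ⟨hn, _, hp⟩ => two_le_of_hasPath_self hn hp)

lemma ArcsOnTriangles.girth_le_three (htri : G.ArcsOnTriangles) (hxy : G.Adj x y)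
    (hyx : ¬ G.Adj y x) : G.girth ≤ 3 :=
  let ⟨_, hyz, hzx⟩ := htri x y hxy hyx
  Nat.sInf_le ⟨three_pos, x, hasPath_three hxy hyz hzx⟩

lemma ArcsOnTriangles.girth_eq_three (htri : G.ArcsOnTriangles) (hxy : G.Adj x y)
    (hyx : ¬ G.Adj y x) (hdigon : ∀ u v, G.Adj u v → ¬ G.Adj v u) : G.girth = 3 := by
  obtain ⟨z, hyz, hzx⟩ := htri x y hxy hyx
  refine le_antisymm (htri.girth_le_three hxy hyx)
    (le_csInf ⟨3, three_pos, x, hasPath_three hxy hyz hzx⟩ fun n ⟨hn, u, hp⟩ => ?_)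
  by_contra! hlt
  obtain rfl : n = 2 := by
    have := two_le_of_hasPath_self hn hp
    omega
  obtain ⟨v, huv, hvu⟩ := hasPath_two.mp hp
  exact hdigon u v huv hvu

lemma IsSemicomplete.tdSet_eq (hsemi : G.IsSemicomplete) (htri : G.ArcsOnTriangles)
    (hxy : G.Adj x y) (hyx : ¬ G.Adj y x) :
    G.tdSet = {((0 : ℕ), (0 : ℕ)), (1, 2), (2, 1), (1, G.girth - 1)} := by
  have h12 : G.tdist x y = (1, 2) := htri.tdist_of_adj_of_not_adj hxy hyx
  have h21 : G.tdist y x = (2, 1) := by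
    rw [tdist_swap, h12]
    rfl
  have h00 : G.tdist x x = (0, 0) := by simp [tdist, dist_self]
  by_cases hdigon : ∃ u v, G.Adj u v ∧ G.Adj v u
  · obtain ⟨u, v, huv, hvu⟩ := hdigon
    rw [girth_eq_two huv hvu]
    ext p
    constructor
    · rintro ⟨a, b, rfl⟩
      rcases hsemi.tdist_cases htri a b with h | h | h | h <;> simp [h]
    · rintro (rfl | rfl | rfl | rfl)
      exacts [⟨x, x, h00⟩, ⟨x, y, h12⟩, ⟨y, x, h21⟩, ⟨u, v, tdist_of_adj_of_adj huv hvu⟩]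
  · push Not at hdigon
    rw [htri.girth_eq_three hxy hyx hdigon]
    ext p
    constructor
    · rintro ⟨a, b, rfl⟩
      rcases hsemi.tdist_cases htri a b with h | h | h | h
      · simp [h]
      · exact absurd (dist_eq_one_iff.mp (congrArg Prod.snd h))
          (hdigon a b (dist_eq_one_iff.mp (congrArg Prod.fst h)))
      · simp [h]
      · simp [h]
    · rintro (rfl | rfl | rfl | rfl)
      exacts [⟨x, x, h00⟩, ⟨x, y, h12⟩, ⟨y, x, h21⟩, ⟨x, y, h12⟩]

lemma IsSemicomplete.exists_tdist_partner [Finite V] (hsemi : G.IsSemicomplete)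
    (hdeg : ∀ x y, G.outDeg x = G.outDeg y ∨ G.inDeg x = G.inDeg y)
    (hnc : ¬ G.IsCompleteDigraph) : ∃ h₀, ∀ x, ∃ y, x ≠ y ∧ G.tdist x y = h₀ := by
  have htri := hsemi.arcsOnTriangles hdeg
  rcases forall_eq_or_forall_eq_of_eq_or_eq hdeg with hout | hin
  · refine ⟨(2, 1), fun x => ?_⟩
    obtain ⟨y, hyx, hxy⟩ := forall_exists_not_adj_of_outDeg_eq hout hnc x
    refine ⟨y, hyx.symm, ?_⟩
    rw [tdist_swap, htri.tdist_of_adj_of_not_adj ((hsemi y x hyx).resolve_right hxy) hxy]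
    rfl
  · refine ⟨(1, 2), fun x => ?_⟩
    obtain ⟨y, hyx, hxy⟩ := forall_exists_not_adj_of_inDeg_eq hin hnc x
    exact ⟨y, hyx.symm, htri.tdist_of_adj_of_not_adj ((hsemi y x hyx).resolve_left hxy) hxy⟩

section Induce

variable {s : Set V}

lemma HasPath.of_induce {x y : s} {n : ℕ} (h : (G.induce s).HasPath x y n) :
    G.HasPath x y n :=
  let ⟨f, h0, hn, hf⟩ := h
  ⟨fun k => f k, congrArg Subtype.val h0, congrArg Subtype.val hn, hf⟩

lemma dist_induce {x y : s} {n : ℕ} (hn : n ≤ 2) (h : (G.induce s).HasPath x y n) :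
    (G.induce s).dist x y = G.dist x y := by
  have hG := hasPath_dist h.of_induce
  refine le_antisymm ?_ (dist_le_of_hasPath (hasPath_dist h).of_induce)
  rcases Nat.lt_or_ge (G.dist x y) 2 with hlt | hge
  · interval_cases hk : G.dist x y
    · exact dist_le_of_hasPath (hasPath_zero.mpr (Subtype.ext (hasPath_zero.mp hG)))
    · exact dist_le_of_hasPath (hasPath_one.mpr ((hasPath_one (G := G)).mp hG))
  · exact (dist_le_of_hasPath h).trans (hn.trans hge)

lemma IsSemicomplete.tdist_induce (hsemi : (G.induce s).IsSemicomplete)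
    (htri : (G.induce s).ArcsOnTriangles) (x y : s) :
    (G.induce s).tdist x y = G.tdist x y := by
  obtain ⟨k, hk, hxy⟩ := hsemi.exists_hasPath_le_two htri x y
  obtain ⟨l, hl, hyx⟩ := hsemi.exists_hasPath_le_two htri y x
  rw [tdist, tdist, dist_induce hk hxy, dist_induce hl hyx]

lemma card_P_induce (hG : G.IsWDR) (htd : ∀ x y : s, (G.induce s).tdist x y = G.tdist x y)
    {i j : ℕ × ℕ} {x y : s} (hP : G.P i j x y ⊆ s) :
    Nat.card ((G.induce s).P i j x y) = G.p ((G.induce s).tdist x y) i j := by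
  have himage : Subtype.val '' (G.induce s).P i j x y = G.P i j x y := by
    ext z
    constructor
    · rintro ⟨w, ⟨hxw, hwy⟩, rfl⟩
      exact ⟨htd x w ▸ hxw, htd w y ▸ hwy⟩
    · intro hz
      refine ⟨⟨z, hP hz⟩, ⟨?_, ?_⟩, rfl⟩
      · rw [htd]
        exact hz.1
      · rw [htd]
        exact hz.2
  rw [← Nat.card_image_of_injective Subtype.val_injective, himage, htd, hG.2]

lemma IsSemicomplete.P_subset_of_mem_tdSet (hG : G.StronglyConnected)
    (hsemi : (G.induce s).IsSemicomplete) (htri : (G.induce s).ArcsOnTriangles)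
    (hcommon : ∀ x y : s, x ≠ y → ∀ z, G.underlying.Adj x z → G.underlying.Adj y z → z ∈ s)
    {i j : ℕ × ℕ} (hi : i ∈ (G.induce s).tdSet) (hj : j ∈ (G.induce s).tdSet) {x y : s}
    (hxy : x ≠ y) : G.P i j x y ⊆ s := by
  have hnear : ∀ p ∈ (G.induce s).tdSet, p = (0, 0) ∨ p.1 = 1 ∨ p.2 = 1 := by
    rintro _ ⟨u, v, rfl⟩
    rcases hsemi.tdist_cases htri u v with h | h | h | h <;> simp [h]
  rintro z ⟨hxz, hzy⟩
  rcases hG.eq_or_adj_of_tdist (hxz ▸ hnear i hi) with rfl | hxz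
  · exact x.2
  rcases hG.eq_or_adj_of_tdist (hzy ▸ hnear j hj) with rfl | hzy
  · exact y.2
  exact hcommon x y hxy z hxz hzy.symm

lemma isWDR_induce [Finite s] (hG : G.IsWDR) (hsemi : (G.induce s).IsSemicomplete)
    (htri : (G.induce s).ArcsOnTriangles)
    (hcommon : ∀ x y : s, x ≠ y → ∀ z, G.underlying.Adj x z → G.underlying.Adj y z → z ∈ s)
    (hpartner : ∃ h₀, ∀ x, ∃ y, x ≠ y ∧ (G.induce s).tdist x y = h₀) :
    (G.induce s).IsWDR := by
  have hsc := hsemi.stronglyConnected htri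
  have htd := hsemi.tdist_induce htri
  obtain ⟨h₀, hpartner⟩ := hpartner
  refine isWDR_of_card_P_eq hsc fun i j x y x' y' h =>
    card_P_eq_of_partner hsc hpartner ?_ i j h
  intro i j x y x' y' hxy h
  have hxy' : x' ≠ y' := by
    rintro rfl
    exact hxy (hsc.tdist_eq_zero_iff.mp (h.trans (hsc.tdist_eq_zero_iff.mpr rfl)))
  by_cases hij : i ∈ (G.induce s).tdSet ∧ j ∈ (G.induce s).tdSet
  · have hsub := fun {u v : s} (huv : u ≠ v) =>
      hsemi.P_subset_of_mem_tdSet hG.1 htri hcommon hij.1 hij.2 huv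
    rw [card_P_induce hG htd (hsub hxy), card_P_induce hG htd (hsub hxy'), h]
  · have hempty : ∀ u v : s, (G.induce s).P i j u v = ∅ := fun u v =>
      Set.eq_empty_of_forall_notMem fun _ hz => hij (mem_tdSet_of_mem_P hz)
    rw [hempty, hempty]

end Induce

end Digraph

section Line

variable {S : Type*} {n : ℕ} {i : Fin (n + 1)} {α : Fin n → S} {x y : Fin (n + 1) → S}

lemma apply_eq_of_mem_lineSet (hx : x ∈ lineSet i α) (hy : y ∈ lineSet i α) {j : Fin (n + 1)}
    (hj : j ≠ i) : x j = y j := by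
  obtain ⟨a, rfl⟩ := hx
  obtain ⟨b, rfl⟩ := hy
  obtain ⟨k, rfl⟩ := Fin.exists_succAbove_eq hj
  simp only [Fin.insertNth_apply_succAbove]

lemma eq_of_mem_lineSet (hx : x ∈ lineSet i α) (hy : y ∈ lineSet i α) (h : x i = y i) :
    x = y :=
  funext fun j => if hj : j = i then hj ▸ h else apply_eq_of_mem_lineSet hx hy hj

lemma card_lineSet (i : Fin (n + 1)) (α : Fin n → S) :
    Nat.card (lineSet i α) = Nat.card S :=
  Nat.card_range_of_injective fun a b h => by
    simpa only [Fin.insertNth_apply_same] using congrFun h i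

lemma pad_castLE_of_mem_lineSet {o : S} {m : ℕ} (hmd : m ≤ n + 1) (hi : i.1 < m)
    (hα : α ∈ Tset S o m) (hx : x ∈ lineSet i α) :
    pad o (n + 1) m (fun j => x (Fin.castLE hmd j)) = x := by
  funext j
  unfold pad
  split_ifs with hj
  · rfl
  · have hji : j ≠ i := by
      rintro rfl
      exact hj hi
    obtain ⟨a, rfl⟩ := hx
    obtain ⟨k, rfl⟩ := Fin.exists_succAbove_eq hji
    have hk : (i.succAbove k).1 ≤ k.1 + 1 := by
      unfold Fin.succAbove
      split_ifs <;> simp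
    simp only [Fin.insertNth_apply_succAbove, hα k (by omega)]

lemma line_isSemicomplete (Γ : Digraph (Fin (n + 1) → S)) {o : S} {m : ℕ} (hmd : m ≤ n + 1)
    (hham : (Γ.trunc o m).underlying = hammingGraph (Fin m) S) (hi : i.1 < m)
    (hα : α ∈ Tset S o m) : (Γ.line i α).IsSemicomplete := by
  rintro ⟨x, hx⟩ ⟨y, hy⟩ hxy
  have hne : x i ≠ y i := fun h => hxy (Subtype.ext (eq_of_mem_lineSet hx hy h))
  have hadj : (hammingGraph (Fin m) S).Adj (fun j => x (Fin.castLE hmd j))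
      (fun j => y (Fin.castLE hmd j)) :=
    ⟨⟨i.1, hi⟩, hne, fun j hj => apply_eq_of_mem_lineSet hx hy fun h => hj (Fin.ext (by
      simpa using congrArg Fin.val h))⟩
  rw [← hham] at hadj
  simp only [Digraph.underlying, Digraph.trunc, pad_castLE_of_mem_lineSet hmd hi hα hx,
    pad_castLE_of_mem_lineSet hmd hi hα hy] at hadj
  exact hadj

lemma mem_lineSet_of_adj_of_adj [Finite S] {Γ : Digraph (Fin (n + 1) → S)}
    (hsemi : (Γ.line i α).IsSemicomplete)
    (ha1 : ∀ x y, Γ.underlying.dist x y = 1 → aNum Γ.underlying 1 x y = Nat.card S - 2)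
    (x y : lineSet i α) (hxy : x ≠ y) (z : Fin (n + 1) → S) (hxz : Γ.underlying.Adj x z)
    (hyz : Γ.underlying.Adj y z) : z ∈ lineSet i α := by
  have hclique : Γ.underlying.IsClique (lineSet i α) := fun u hu v hv huv =>
    hsemi ⟨u, hu⟩ ⟨v, hv⟩ fun h => huv (congrArg Subtype.val h)
  have hxy' : (x : Fin (n + 1) → S) ≠ y := fun h => hxy (Subtype.ext h)
  refine hclique.mem_of_adj_of_adj_of_aNum_le x.2 y.2 hxy' ?_ hxz hyz
  rw [ha1 x y (SimpleGraph.dist_eq_one_iff_adj.mpr (hclique x.2 y.2 hxy')),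
    ← Nat.card_coe_set_eq, card_lineSet]

end Line

end Paper

open Paper in
theorem lemma_line_wdr_general {S : Type*} [Finite S] {n : ℕ}
    (Γ : Paper.Digraph (Fin (n + 1) → S)) (q : ℕ) (hq : q = Nat.card S)
    (hwdr : Γ.IsWDR)
    (ha1 : ∀ x y, Γ.underlying.dist x y = 1 → aNum Γ.underlying 1 x y = q - 2)
    (o : S) (m : ℕ) (hmd : m ≤ n + 1)
    (hham : (Γ.trunc o m).underlying = hammingGraph (Fin m) S)
    (i : Fin (n + 1)) (hi : i.1 < m)
    (α : Fin n → S) (hα : α ∈ Tset S o m)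
    (hdeg : ∀ x y : lineSet i α,
      (Γ.line i α).outDeg x = (Γ.line i α).outDeg y ∨
      (Γ.line i α).inDeg x = (Γ.line i α).inDeg y)
    (hnc : ¬ (Γ.line i α).IsCompleteDigraph) :
    (Γ.line i α).IsWDR ∧ (Γ.line i α).diameter = 2 ∧ (Γ.line i α).girth ≤ 3 ∧
      (Γ.line i α).tdSet =
        {((0 : ℕ), (0 : ℕ)), (1, 2), (2, 1), (1, (Γ.line i α).girth - 1)} := by
  subst hq
  have hsemi := line_isSemicomplete Γ hmd hham hi hα
  have htri := hsemi.arcsOnTriangles hdeg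
  obtain ⟨x, y, hxy, hyx⟩ := hsemi.exists_adj_not_adj hnc
  refine ⟨?_, hsemi.diameter_eq_two htri hxy hyx, htri.girth_le_three hxy hyx,
    hsemi.tdSet_eq htri hxy hyx⟩
  exact Digraph.isWDR_induce hwdr hsemi htri (mem_lineSet_of_adj_of_adj hsemi ha1)
    (hsemi.exists_tdist_partner hdeg hnc)

open Paper in
/-- **Lemma 3.4.** If all vertices of `Γᵢ(α)` have pairwise equal out-degrees or
pairwise equal in-degrees in `Γᵢ(α)`, and `Γᵢ(α)` is not a complete graph, then
`Γᵢ(α)` is a weakly distance-regular digraph of diameter `2` and girth `g ≤ 3`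
with `∂̃(Γᵢ(α)) = {(0,0),(1,2),(2,1),(1,g−1)}`. -/
theorem lemma_line_wdr {S : Type*} [Finite S] {n : ℕ}
    (Γ : Paper.Digraph (Fin (n + 1) → S)) (q : ℕ) (hq : q = Nat.card S)
    (hwdr : Γ.IsWDR) (hcomm : Γ.IsCommutative)
    (hdrg : IsDRG Γ.underlying)
    (ha1 : ∀ x y, Γ.underlying.dist x y = 1 → aNum Γ.underlying 1 x y = q - 2)
    (hc2 : ∀ x y, Γ.underlying.dist x y = 2 → cNum Γ.underlying 2 x y = 2)
    (o : S) (m : ℕ) (hm1 : 1 ≤ m) (hmd : m ≤ n + 1)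
    (hham : (Γ.trunc o m).underlying = hammingGraph (Fin m) S)
    (i : Fin (n + 1)) (hi : i.1 < m)
    (α : Fin n → S) (hα : α ∈ Tset S o m)
    (hdeg : ∀ x y : lineSet i α,
      (Γ.line i α).outDeg x = (Γ.line i α).outDeg y ∨
      (Γ.line i α).inDeg x = (Γ.line i α).inDeg y)
    (hnc : ¬ (Γ.line i α).IsCompleteDigraph) :
    (Γ.line i α).IsWDR ∧ (Γ.line i α).diameter = 2 ∧ (Γ.line i α).girth ≤ 3 ∧
      (Γ.line i α).tdSet =
        {((0 : ℕ), (0 : ℕ)), (1, 2), (2, 1), (1, (Γ.line i α).girth - 1)} :=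
  lemma_line_wdr_general Γ q hq hwdr ha1 o m hmd hham i hi α hα hdeg hnc
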